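/- The jump of the lower representation is continuously equivalent to ρ_<': (i) there exists a continuous function F, defined on the set of all (ρ_<∘ι')-names of real numbers, such that for every x ∈ ℝ and every (ρ_<∘ι')-name q of x, F(q) is a ρ_<'-name of x; and (ii) there exists a continuous function G, defined on the set of all ρ_<'-names of real numbers, such that for every x ∈ ℝ and every ρ_<'-name q of x, G(q) is a (ρ_<∘ι')-name of x. -/

import Mathlib

open Filter Topology

/- The name space `ℕ → ℚ` carries the product topology with `ℚ` discrete. -/
local instance : TopologicalSpace ℚ := ⊥

/-- A ρ_<-name of `x`: a rational sequence with `x = sup_n q n`. -/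
noncomputable def IsRhoLtName (q : ℕ → ℚ) (x : ℝ) : Prop :=
  (x : EReal) = ⨆ n, ((q n : ℝ) : EReal)

/-- A ρ_<'-name of `x`: `x = sup_m inf_n q⟨m,n⟩`, sup/inf taken in ℝ ∪ {±∞}. -/
noncomputable def IsRhoLtPrimeName (q : ℕ → ℚ) (x : ℝ) : Prop :=
  (x : EReal) = ⨆ m, ⨅ n, ((q (Nat.pair m n) : ℝ) : EReal)

/-- A (ρ_<∘ι')-name of `x`: a double sequence (via `Nat.pair`) each of whose rows is
eventually constant, the sequence of row limits being a ρ_<-name of `x`. -/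
noncomputable def IsRhoLtJumpName (q : ℕ → ℚ) (x : ℝ) : Prop :=
  ∃ z : ℕ → ℚ, (∀ n : ℕ, ∃ M : ℕ, ∀ m : ℕ, M ≤ m → q (Nat.pair n m) = z n) ∧ IsRhoLtName z x

local instance : DiscreteTopology ℚ := ⟨rfl⟩

/-- density of rationals in `EReal` -/
private lemma ereal_rat_btwn {a b : EReal} (h : a < b) :
    ∃ q : ℚ, a < ((q : ℝ) : EReal) ∧ ((q : ℝ) : EReal) < b := by
  obtain ⟨c, hc1, hc2⟩ := EReal.exists_between_coe_real h
  obtain ⟨d, hd1, hd2⟩ := EReal.exists_between_coe_real hc2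
  obtain ⟨r, hr1, hr2⟩ := exists_rat_btwn (EReal.coe_lt_coe_iff.mp hd1)
  exact ⟨r, hc1.trans (EReal.coe_lt_coe_iff.mpr hr1), (EReal.coe_lt_coe_iff.mpr hr2).trans hd2⟩

/-- a map is continuous if each output coordinate depends on finitely many inputs -/
private lemma cont_of_finite_dep (f : (ℕ → ℚ) → (ℕ → ℚ))
    (h : ∀ (i : ℕ) (q : ℕ → ℚ), ∃ F : Finset ℕ,
      ∀ q' : ℕ → ℚ, (∀ a ∈ F, q' a = q a) → f q' i = f q i) :
    Continuous f := by
  apply continuous_pi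
  intro i
  rw [continuous_iff_continuousAt]
  intro q
  obtain ⟨F, hF⟩ := h i q
  have hmem : {q' : ℕ → ℚ | ∀ a ∈ F, q' a = q a} ∈ 𝓝 q := by
    have heq : {q' : ℕ → ℚ | ∀ a ∈ F, q' a = q a}
        = ⋂ a ∈ F, (fun q' : ℕ → ℚ => q' a) ⁻¹' {q a} := by
      ext q'; simp
    rw [heq]
    exact (Filter.biInter_finset_mem F).2 fun a _ =>
      ((continuous_apply a).isOpen_preimage _ (isOpen_discrete _)).mem_nhds rfl
  have : Tendsto (fun q' => f q' i) (𝓝 q) (pure (f q i)) := by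
    rw [Filter.tendsto_pure]
    exact Filter.mem_of_superset hmem fun q' hq' => hF q' hq'
  simpa [ContinuousAt, nhds_discrete] using this

/-! ### Direction (i) -/

private def Ffun (q : ℕ → ℚ) (i : ℕ) : ℚ :=
  q (Nat.pair (Nat.unpair i.unpair.1).1 (max (Nat.unpair i.unpair.1).2 i.unpair.2))

/-! ### Direction (ii) -/

private def cand (e : ℕ) : ℕ × ℚ := (e.unpair.1, (Denumerable.eqv ℚ).symm e.unpair.2)

private lemma cand_pair (m : ℕ) (r : ℚ) :
    cand (Nat.pair m (Denumerable.eqv ℚ r)) = (m, r) := by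
  simp [cand, Nat.unpair_pair]

private def good (q : ℕ → ℚ) (e k : ℕ) : Prop :=
  ∀ n ≤ k, (cand e).2 ≤ q (Nat.pair (cand e).1 n)

private lemma good_mono {q : ℕ → ℚ} {e k k' : ℕ} (hk : k' ≤ k) (h : good q e k) :
    good q e k' := fun n hn => h n (hn.trans hk)

private lemma good_congr {q q' : ℕ → ℚ} {e k : ℕ}
    (h : ∀ n ≤ k, q' (Nat.pair (cand e).1 n) = q (Nat.pair (cand e).1 n)) :
    good q' e k ↔ good q e k := by
  constructor <;> intro hg n hn
  · rw [← h n hn]; exact hg n hn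
  · rw [h n hn]; exact hg n hn

private instance goodDec (q : ℕ → ℚ) (e k : ℕ) : Decidable (good q e k) :=
  Nat.decidableBallLE k _

/-- priority list for row `j`: candidates `j, 0, 1, 2, …` -/
private def L (j s : ℕ) : ℕ := if s = 0 then j else s - 1

private lemma L_zero (j : ℕ) : L j 0 = j := rfl

private lemma L_succ (j s : ℕ) : L j (s + 1) = s := by simp [L]

private lemma existsGood (q : ℕ → ℚ) (j k : ℕ) : ∃ s, good q (L j s) k := by
  obtain ⟨r, hr⟩ : ∃ r : ℚ, ∀ n ≤ k, r ≤ q (Nat.pair 0 n) :=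
    ⟨(Finset.range (k+1)).inf' ⟨0, by simp⟩ (fun n => q (Nat.pair 0 n)),
      fun n hn => Finset.inf'_le _ (Finset.mem_range.mpr (Nat.lt_succ_of_le hn))⟩
  refine ⟨Nat.pair 0 (Denumerable.eqv ℚ r) + 1, ?_⟩
  intro n hn
  rw [L_succ, cand_pair]
  exact hr n hn

private noncomputable def Gfun (q : ℕ → ℚ) (i : ℕ) : ℚ :=
  (cand (L i.unpair.1 (Nat.find (existsGood q i.unpair.1 i.unpair.2)))).2

private lemma Gfun_pair (q : ℕ → ℚ) (j k : ℕ) :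
    Gfun q (Nat.pair j k) = (cand (L j (Nat.find (existsGood q j k)))).2 := by
  simp [Gfun, Nat.unpair_pair]

section SD

variable (q : ℕ → ℚ) (hAG : ∀ j : ℕ, ∃ s : ℕ, ∀ k : ℕ, good q (L j s) k)

/-- The least candidate index in the priority list of row `j` that is never refuted. -/
private noncomputable def sd (j : ℕ) : ℕ :=
  @Nat.find (fun s => ∀ k, good q (L j s) k) (Classical.decPred _) (hAG j)

private lemma sd_spec (j : ℕ) : ∀ k, good q (L j (sd q hAG j)) k :=
  @Nat.find_spec (fun s => ∀ k, good q (L j s) k) (Classical.decPred _) (hAG j)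

private lemma sd_min {j s : ℕ} (hs : s < sd q hAG j) : ∃ k, ¬ good q (L j s) k := by
  exact not_forall.mp
    (@Nat.find_min (fun s => ∀ k, good q (L j s) k) (Classical.decPred _) (hAG j) s hs)

private lemma sd_le {j s : ℕ} (hs : ∀ k, good q (L j s) k) : sd q hAG j ≤ s :=
  @Nat.find_le s (fun s => ∀ k, good q (L j s) k) (Classical.decPred _) (hAG j) hs

/-- The limit value of row `j`. -/
private noncomputable def zfun (j : ℕ) : ℚ := (cand (L j (sd q hAG j))).2

/-- Rows of `Gfun q` are eventually constant with value `zfun`. -/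
private lemma row_const (j : ℕ) :
    ∃ M : ℕ, ∀ k : ℕ, M ≤ k → Gfun q (Nat.pair j k) = zfun q hAG j := by
  classical
  have hK : ∀ s : ℕ, ∃ k, s < sd q hAG j → ¬ good q (L j s) k := by
    intro s
    by_cases h : s < sd q hAG j
    · obtain ⟨k, hk⟩ := sd_min q hAG h
      exact ⟨k, fun _ => hk⟩
    · exact ⟨0, fun h' => absurd h' h⟩
  choose K hKs using hK
  refine ⟨(Finset.range (sd q hAG j)).sup K, fun k hk => ?_⟩
  rw [Gfun_pair]
  have h1 : Nat.find (existsGood q j k) ≤ sd q hAG j :=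
    Nat.find_le (sd_spec q hAG j k)
  have h2 : sd q hAG j ≤ Nat.find (existsGood q j k) := by
    by_contra hcon
    push_neg at hcon
    refine hKs _ hcon ?_
    refine good_mono ?_ (Nat.find_spec (existsGood q j k))
    exact le_trans (Finset.le_sup (Finset.mem_range.mpr hcon)) hk
  rw [le_antisymm h1 h2]
  rfl

/-- Each `zfun` value is a lower bound for some row of `q`. -/
private lemma zfun_le (j n : ℕ) :
    zfun q hAG j ≤ q (Nat.pair (cand (L j (sd q hAG j))).1 n) :=
  sd_spec q hAG j n n le_rfl

/-- If the candidate `(m, r)` is never refuted, then `r` is attained as a `zfun` value. -/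
private lemma zfun_attained (m : ℕ) (r : ℚ) (h : ∀ n : ℕ, r ≤ q (Nat.pair m n)) :
    zfun q hAG (Nat.pair m (Denumerable.eqv ℚ r)) = r := by
  set j0 := Nat.pair m (Denumerable.eqv ℚ r) with hj0
  have hgood0 : ∀ k, good q (L j0 0) k := by
    intro k n _
    rw [L_zero, hj0, cand_pair]
    exact h n
  have h0 : sd q hAG j0 = 0 := Nat.le_zero.mp (sd_le q hAG hgood0)
  rw [zfun, h0, L_zero, hj0, cand_pair]

end SD

/-- `ρ_< ∘ ι'` is continuously equivalent to `ρ_<'`. -/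
theorem stmt5 :
    (∃ F : (ℕ → ℚ) → (ℕ → ℚ),
        ContinuousOn F {q | ∃ x : ℝ, IsRhoLtJumpName q x} ∧
        ∀ (x : ℝ) (q : ℕ → ℚ), IsRhoLtJumpName q x → IsRhoLtPrimeName (F q) x) ∧
    (∃ G : (ℕ → ℚ) → (ℕ → ℚ),
        ContinuousOn G {q | ∃ x : ℝ, IsRhoLtPrimeName q x} ∧
        ∀ (x : ℝ) (q : ℕ → ℚ), IsRhoLtPrimeName q x → IsRhoLtJumpName (G q) x) := by
  classical
  constructor
  · -- direction (i)
    refine ⟨Ffun, ?_, ?_⟩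
    · exact (continuous_pi fun i => continuous_apply _).continuousOn
    · rintro x q ⟨z, hz, hzx⟩
      unfold IsRhoLtPrimeName
      have key : ∀ a : ℕ,
          (⨆ k, ⨅ n, ((q (Nat.pair a (max k n)) : ℝ) : EReal)) = ((z a : ℝ) : EReal) := by
        intro a
        obtain ⟨M, hM⟩ := hz a
        apply le_antisymm
        · refine iSup_le fun k => iInf_le_of_le M ?_
          rw [hM _ (le_max_right _ _)]
        · refine le_iSup_of_le M (le_iInf fun n => ?_)
          rw [hM _ (le_max_left _ _)]
      have step1 : (⨆ m, ⨅ n, ((Ffun q (Nat.pair m n) : ℝ) : EReal))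
          = ⨆ p : ℕ × ℕ, ⨅ n, ((q (Nat.pair p.1 (max p.2 n)) : ℝ) : EReal) := by
        rw [← Equiv.iSup_comp (g := fun p : ℕ × ℕ =>
          ⨅ n, ((q (Nat.pair p.1 (max p.2 n)) : ℝ) : EReal)) Nat.pairEquiv.symm]
        refine iSup_congr fun m => iInf_congr fun n => ?_
        simp [Ffun, Nat.unpair_pair, Nat.pairEquiv]
        rfl
      rw [step1, iSup_prod]
      simp only [key]
      exact hzx
  · -- direction (ii)
    refine ⟨Gfun, ?_, ?_⟩
    · -- continuity
      apply Continuous.continuousOn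
      apply cont_of_finite_dep
      intro i q
      set j := i.unpair.1
      set k := i.unpair.2
      set s0 := Nat.find (existsGood q j k) with hs0
      refine ⟨(Finset.range (s0+1) ×ˢ Finset.range (k+1)).image
        (fun p : ℕ × ℕ => Nat.pair (cand (L j p.1)).1 p.2), ?_⟩
      intro q' hq'
      have hagree : ∀ s ≤ s0, ∀ n ≤ k, q' (Nat.pair (cand (L j s)).1 n)
          = q (Nat.pair (cand (L j s)).1 n) := by
        intro s hs n hn
        apply hq'
        exact Finset.mem_image.mpr ⟨(s, n), Finset.mem_product.mpr
          ⟨Finset.mem_range.mpr (Nat.lt_succ_of_le hs),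
           Finset.mem_range.mpr (Nat.lt_succ_of_le hn)⟩, rfl⟩
      have h1 : good q' (L j s0) k :=
        (good_congr (hagree s0 le_rfl)).2 (Nat.find_spec (existsGood q j k))
      have h2 : ∀ s < s0, ¬ good q' (L j s) k := fun s hs hg =>
        Nat.find_min (existsGood q j k) hs ((good_congr (hagree s hs.le)).1 hg)
      have hfind : Nat.find (existsGood q' j k) = s0 :=
        le_antisymm (Nat.find_le h1)
          (le_of_not_gt fun hlt => h2 _ hlt (Nat.find_spec (existsGood q' j k)))
      show Gfun q' i = Gfun q i
      unfold Gfun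
      rw [hfind]
    · -- correctness
      intro x q hq
      unfold IsRhoLtPrimeName at hq
      -- a candidate that is never refuted
      have hcandidate : ∃ e : ℕ, ∀ k, good q e k := by
        have hx1 : (((x - 1 : ℝ)) : EReal) < (x : EReal) :=
          EReal.coe_lt_coe_iff.mpr (sub_one_lt x)
        rw [hq] at hx1
        obtain ⟨m, hm⟩ := lt_iSup_iff.mp hx1
        obtain ⟨r, _, hr2⟩ := ereal_rat_btwn hm
        refine ⟨Nat.pair m (Denumerable.eqv ℚ r), fun k n _ => ?_⟩
        rw [cand_pair]
        have : ((r : ℝ) : EReal) ≤ ((q (Nat.pair m n) : ℝ) : EReal) :=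
          hr2.le.trans (iInf_le _ n)
        exact_mod_cast this
      have hAG : ∀ j : ℕ, ∃ s : ℕ, ∀ k : ℕ, good q (L j s) k := by
        intro j
        obtain ⟨e, he⟩ := hcandidate
        exact ⟨e + 1, fun k => by rw [L_succ]; exact he k⟩
      refine ⟨zfun q hAG, row_const q hAG, ?_⟩
      unfold IsRhoLtName
      apply le_antisymm
      · -- x ≤ sup z
        rw [hq]
        apply iSup_le
        intro m
        by_contra hcon
        push_neg at hcon
        obtain ⟨r, hr1, hr2⟩ := ereal_rat_btwn hcon
        have hrq : ∀ n : ℕ, r ≤ q (Nat.pair m n) := by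
          intro n
          have : ((r : ℝ) : EReal) ≤ ((q (Nat.pair m n) : ℝ) : EReal) :=
            hr2.le.trans (iInf_le _ n)
          exact_mod_cast this
        have hz0 := zfun_attained q hAG m r hrq
        have : ((r : ℝ) : EReal) ≤ ⨆ j, ((zfun q hAG j : ℝ) : EReal) := by
          rw [← hz0]
          exact le_iSup (fun j => ((zfun q hAG j : ℝ) : EReal)) _
        exact absurd (this.trans_lt hr1) (lt_irrefl _)
      · -- sup z ≤ x
        refine iSup_le fun j => ?_
        rw [hq]
        refine le_trans ?_ (le_iSup _ (cand (L j (sd q hAG j))).1)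
        refine le_iInf fun n => ?_
        exact_mod_cast zfun_le q hAG j n
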